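/- Let T₂ be an X-tree, χ a character, A a state with X_A = χ⁻¹(A), and e an edge of T₂ generating a split P|Q with X_A ⊆ P. Let χ' be obtained from χ by relabeling A := B for some state B with χ⁻¹(B) ⊆ Q. For any extension ω' of χ' to T₂, the modification ω obtained by reassigning state A to every vertex in the P-side component of T₂ − e that ω' colors B yields an extension of χ with at most one more mutation edge than ω'. Hence ℓ(T₂,χ) ≤ ℓ(T₂,χ') + 1. -/

import Mathlib

open SimpleGraph

namespace PhyloMP

/-- The set of mutation edges of a vertex coloring `ω` of a graph:
edges whose two endpoints receive different states. -/
def mutationEdges {V C : Type} (g : SimpleGraph V) (ω : V → C) : Set (Sym2 V) :=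
  {e | e ∈ g.edgeSet ∧ ∃ u v : V, e = s(u, v) ∧ ω u ≠ ω v}

/-- An unrooted binary phylogenetic tree on taxon set `X`, with vertex set `V`:
a tree whose degree-1 vertices (leaves) are bijectively labeled by `X` and whose
other vertices have degree 3. -/
structure XTree (X V : Type) [Fintype V] where
  g : SimpleGraph V
  isTree : g.IsTree
  leaf : X → V
  leafInj : Function.Injective leaf
  leafDeg : ∀ x, (g.neighborSet (leaf x)).ncard = 1
  leavesOnly : ∀ v, (g.neighborSet v).ncard = 1 → ∃ x, leaf x = v
  internalDeg : ∀ v, (g.neighborSet v).ncard ≠ 1 → (g.neighborSet v).ncard = 3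

variable {X V C : Type} [Fintype V]

/-- `ω` extends the character `χ` to all vertices of `T`. -/
def IsExtension (T : XTree X V) (χ : X → C) (ω : V → C) : Prop :=
  ∀ x, ω (T.leaf x) = χ x

/-- The parsimony score `ℓ(T,χ)`: the minimum number of mutation edges over
all extensions of `χ` to `T`. -/
noncomputable def score (T : XTree X V) (χ : X → C) : ℕ :=
  sInf {n | ∃ ω : V → C, IsExtension T χ ω ∧ (mutationEdges T.g ω).ncard = n}

/-- A most parsimonious extension. -/
def IsMPExtension (T : XTree X V) (χ : X → C) (ω : V → C) : Prop :=
  IsExtension T χ ω ∧ (mutationEdges T.g ω).ncard = score T χ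

/-- `|χ|`: the number of states used by the character `χ`. -/
noncomputable def nStates {X C : Type} (χ : X → C) : ℕ := (Set.range χ).ncard

/-- `χ` is convex on `T`: its parsimony score equals its number of states minus one. -/
def IsConvex (T : XTree X V) (χ : X → C) : Prop := score T χ = nStates χ - 1

/-- The maximum parsimony distance between two `X`-trees. -/
noncomputable def dMP {V₁ V₂ : Type} [Fintype V₁] [Fintype V₂]
    (T₁ : XTree X V₁) (T₂ : XTree X V₂) : ℕ :=
  sSup {d | ∃ χ : X → ℕ, Nat.dist (score T₁ χ) (score T₂ χ) = d}

/-- A character achieving the maximum parsimony distance. -/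
def IsOptimal {V₁ V₂ : Type} [Fintype V₁] [Fintype V₂]
    (T₁ : XTree X V₁) (T₂ : XTree X V₂) (χ : X → C) : Prop :=
  Nat.dist (score T₁ χ) (score T₂ χ) = dMP T₁ T₂

/-- The forest induced by an extension `ω`: delete all mutation edges of `ω` from `T`. -/
noncomputable def forest (T : XTree X V) (ω : V → C) : SimpleGraph V :=
  T.g.deleteEdges (mutationEdges T.g ω)

/-- A connected component `c` of the forest `F` carries the state `s`. -/
def carries {V C : Type} (F : SimpleGraph V) (ω : V → C) (c : F.ConnectedComponent) (s : C) : Prop :=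
  ∃ v, F.connectedComponentMk v = c ∧ ω v = s

/-- The number of components of `F` carrying the state `s`. A state is *unique*
if this is 1 and *repeating* if this is at least 2. -/
noncomputable def stateMultiplicity {V C : Type} (F : SimpleGraph V) (ω : V → C) (s : C) : ℕ :=
  {c : F.ConnectedComponent | carries F ω c s}.ncard

/-- Relabel the state `A` as `B` in the character `χ`. -/
def relabel {X C : Type} [DecidableEq C] (χ : X → C) (A B : C) : X → C :=
  fun x => if χ x = A then B else χ x

/-- Two states `A`, `B` are adjacent (with respect to the coloring `ω`) if some edge of the
graph joins a vertex colored `A` to a vertex colored `B`; for distinct states, this edge is a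
mutation edge joining the corresponding components of the induced forest. -/
def statesAdjacent {V C : Type} (g : SimpleGraph V) (ω : V → C) (A B : C) : Prop :=
  ∃ u v, g.Adj u v ∧ ω u = A ∧ ω v = B

end PhyloMP

/-!
Since `T₂` is a tree, `s(u, v)` is a bridge, so the `B`-taxa lie off the `u`-side and the
recoloured map still extends `χ`. Every other edge has both endpoints on the same side, where the
recolouring is a function of the old colour, so it cannot create a new mutation edge: only
`s(u, v)` can. Applying this to a most parsimonious extension of `χ'` bounds the score.
-/

lemma SimpleGraph.reachable_deleteEdges_iff_of_adj {V : Type} {g : SimpleGraph V} {e : Sym2 V}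
    {a b : V} (hab : g.Adj a b) (hne : s(a, b) ≠ e) (w : V) :
    (g.deleteEdges {e}).Reachable a w ↔ (g.deleteEdges {e}).Reachable b w := by
  have hadj : (g.deleteEdges {e}).Adj a b := by simpa [hne] using hab
  exact ⟨hadj.reachable.symm.trans, hadj.reachable.trans⟩

namespace PhyloMP

section MutationEdges

variable {V C : Type} {g : SimpleGraph V}

lemma mutationEdges_subset_union {ω ω' : V → C} {S : Set (Sym2 V)}
    (h : ∀ a b, g.Adj a b → s(a, b) ∉ S → ω' a = ω' b → ω a = ω b) :
    mutationEdges g ω ⊆ mutationEdges g ω' ∪ S := by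
  rintro _ ⟨hadj, a, b, rfl, hab⟩
  by_cases hS : s(a, b) ∈ S
  · exact Or.inr hS
  · exact Or.inl ⟨hadj, a, b, rfl, fun heq => hab (h a b hadj hS heq)⟩

lemma ncard_mutationEdges_le_add_one [Finite V] {ω ω' : V → C} {e : Sym2 V}
    (h : ∀ a b, g.Adj a b → s(a, b) ≠ e → ω' a = ω' b → ω a = ω b) :
    (mutationEdges g ω).ncard ≤ (mutationEdges g ω').ncard + 1 :=
  calc (mutationEdges g ω).ncard
      ≤ (mutationEdges g ω' ∪ {e}).ncard :=
        Set.ncard_le_ncard (mutationEdges_subset_union h)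
    _ ≤ (mutationEdges g ω').ncard + ({e} : Set (Sym2 V)).ncard := Set.ncard_union_le _ _
    _ = (mutationEdges g ω').ncard + 1 := by rw [Set.ncard_singleton]

end MutationEdges

section Recolor

variable {X V C : Type} [Fintype V] [DecidableEq C]

lemma isExtension_recolor (T : XTree X V) {χ : X → C} {A B : C}
    (p : V → Prop) [DecidablePred p]
    (hA : ∀ x, χ x = A → p (T.leaf x)) (hB : ∀ x, χ x = B → ¬ p (T.leaf x))
    {ω' : V → C} (hω' : IsExtension T (relabel χ A B) ω') :
    IsExtension T χ (fun w => if p w ∧ ω' w = B then A else ω' w) := by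
  intro x
  have hx := hω' x
  simp only [relabel] at hx
  dsimp only
  by_cases hxA : χ x = A
  · rw [if_pos hxA] at hx
    rw [if_pos ⟨hA x hxA, hx⟩, hxA]
  · rw [if_neg hxA] at hx
    by_cases hxB : χ x = B
    · rw [if_neg fun h => hB x hxB h.1, hx]
    · rw [if_neg fun h => hxB (hx ▸ h.2), hx]

lemma ncard_mutationEdges_recolor_le (g : SimpleGraph V) (e : Sym2 V) (p : V → Prop)
    [DecidablePred p] (hp : ∀ a b, g.Adj a b → s(a, b) ≠ e → (p a ↔ p b))
    (ω' : V → C) (A B : C) :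
    (mutationEdges g (fun w => if p w ∧ ω' w = B then A else ω' w)).ncard
      ≤ (mutationEdges g ω').ncard + 1 :=
  ncard_mutationEdges_le_add_one (e := e) fun a b hadj he heq => by
    simp only [hp a b hadj he, heq]

end Recolor

section Score

variable {X V C : Type} [Fintype V]

lemma score_le_ncard {T : XTree X V} {χ : X → C} {ω : V → C} (hω : IsExtension T χ ω) :
    score T χ ≤ (mutationEdges T.g ω).ncard :=
  Nat.sInf_le ⟨ω, hω, rfl⟩

lemma exists_isMPExtension {T : XTree X V} {χ : X → C} {ω : V → C}
    (hω : IsExtension T χ ω) :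
    ∃ ω₀, IsMPExtension T χ ω₀ :=
  Nat.sInf_mem (s := {n | ∃ ω, IsExtension T χ ω ∧ (mutationEdges T.g ω).ncard = n})
    ⟨_, ω, hω, rfl⟩

lemma score_le_score_add {T : XTree X V} {χ χ' : X → C} {k : ℕ} {ω' : V → C}
    (hω' : IsExtension T χ' ω')
    (h : ∀ ω', IsExtension T χ' ω' →
      ∃ ω, IsExtension T χ ω ∧
        (mutationEdges T.g ω).ncard ≤ (mutationEdges T.g ω').ncard + k) :
    score T χ ≤ score T χ' + k := by
  obtain ⟨ω₀, hω₀, hscore⟩ := exists_isMPExtension hω'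
  obtain ⟨ω, hω, hcard⟩ := h ω₀ hω₀
  exact hscore ▸ (score_le_ncard hω).trans hcard

end Score

end PhyloMP

open PhyloMP in
open scoped Classical in
theorem stmt_16_general {X V C : Type} [Fintype V] [DecidableEq C] (T₂ : XTree X V) (χ : X → C)
    (A B : C) (u v : V) (huv : T₂.g.Adj u v)
    (hA : ∀ x, χ x = A → (T₂.g.deleteEdges {s(u, v)}).Reachable (T₂.leaf x) u)
    (hB : ∀ x, χ x = B → (T₂.g.deleteEdges {s(u, v)}).Reachable (T₂.leaf x) v)
    (ω' : V → C) (hω' : IsExtension T₂ (relabel χ A B) ω') :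
    IsExtension T₂ χ
      (fun w => if (T₂.g.deleteEdges {s(u, v)}).Reachable w u ∧ ω' w = B then A else ω' w) ∧
    (mutationEdges T₂.g
        (fun w => if (T₂.g.deleteEdges {s(u, v)}).Reachable w u ∧ ω' w = B then A else ω' w)).ncard
      ≤ (mutationEdges T₂.g ω').ncard + 1 ∧
    score T₂ χ ≤ score T₂ (relabel χ A B) + 1 := by
  set onSideU : V → Prop := fun w => (T₂.g.deleteEdges {s(u, v)}).Reachable w u
  have hbridge : ¬ (T₂.g.deleteEdges {s(u, v)}).Reachable u v :=
    isAcyclic_iff_forall_adj_isBridge.mp T₂.isTree.isAcyclic huv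
  have hB' : ∀ x, χ x = B → ¬ onSideU (T₂.leaf x) :=
    fun x hx hu => hbridge (hu.symm.trans (hB x hx))
  have hside : ∀ a b, T₂.g.Adj a b → s(a, b) ≠ s(u, v) → (onSideU a ↔ onSideU b) :=
    fun a b hab hne => reachable_deleteEdges_iff_of_adj hab hne u
  have hstep : ∀ ω', IsExtension T₂ (relabel χ A B) ω' →
      IsExtension T₂ χ (fun w => if onSideU w ∧ ω' w = B then A else ω' w) ∧
      (mutationEdges T₂.g (fun w => if onSideU w ∧ ω' w = B then A else ω' w)).ncard
        ≤ (mutationEdges T₂.g ω').ncard + 1 :=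
    fun ω' hω' => ⟨isExtension_recolor T₂ onSideU hA hB' hω',
      ncard_mutationEdges_recolor_le T₂.g _ onSideU hside ω' A B⟩
  exact ⟨(hstep ω' hω').1, (hstep ω' hω').2,
    score_le_score_add hω' fun ω' hω' => ⟨_, hstep ω' hω'⟩⟩

open PhyloMP in
open scoped Classical in
/-- Given an edge `{u,v}` of `T₂` splitting the `A`-taxa from the `B`-taxa
and an extension `ω'` of the relabeled character `χ' = (A := B)`, reassigning state `A`
to every vertex on the `u`-side that `ω'` colors `B` yields an extension of `χ` with at
most one more mutation edge; hence `ℓ(T₂,χ) ≤ ℓ(T₂,χ') + 1`. -/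
theorem stmt_16 {X V C : Type} [Fintype V] [DecidableEq C] (T₂ : XTree X V) (χ : X → C)
    (A B : C) (hAB : A ≠ B) (u v : V) (huv : T₂.g.Adj u v)
    (hA : ∀ x, χ x = A → (T₂.g.deleteEdges {s(u, v)}).Reachable (T₂.leaf x) u)
    (hB : ∀ x, χ x = B → (T₂.g.deleteEdges {s(u, v)}).Reachable (T₂.leaf x) v)
    (ω' : V → C) (hω' : IsExtension T₂ (relabel χ A B) ω') :
    IsExtension T₂ χ
      (fun w => if (T₂.g.deleteEdges {s(u, v)}).Reachable w u ∧ ω' w = B then A else ω' w) ∧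
    (mutationEdges T₂.g
        (fun w => if (T₂.g.deleteEdges {s(u, v)}).Reachable w u ∧ ω' w = B then A else ω' w)).ncard
      ≤ (mutationEdges T₂.g ω').ncard + 1 ∧
    score T₂ χ ≤ score T₂ (relabel χ A B) + 1 :=
  stmt_16_general T₂ χ A B u v huv hA hB ω' hω'
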